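/- arXiv:2512.02236 — 6 statements merged into one kernel-verified Lean document; each statement's English description precedes it below -/
import Mathlib

section
/- Let ABC be a nondegenerate triangle with side lengths a = dist(B,C), b = dist(C,A), c = dist(A,B), and let λ_A, λ_B, λ_C > 0. If there exists a point P in the plane with dist(P,A) : dist(P,B) : dist(P,C) = λ_A : λ_B : λ_C (i.e., dist(P,A) = λ_A t, dist(P,B) = λ_B t, dist(P,C) = λ_C t for some t > 0), then the three numbers λ_A·a, λ_B·b, λ_C·c satisfy the triangle inequality: λ_A·a ≤ λ_B·b + λ_C·c, λ_B·b ≤ λ_C·c + λ_A·a, and λ_C·c ≤ λ_A·a + λ_B·b. -/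
theorem mul_dist_le_of_dist_eq_mul {V : Type*} [NormedAddCommGroup V] [InnerProductSpace ℝ V]
    {A B C P : V} {lA lB lC t : ℝ} (ht : 0 < t)
    (hPA : dist P A = lA * t) (hPB : dist P B = lB * t) (hPC : dist P C = lC * t) :
    lA * dist B C ≤ lB * dist C A + lC * dist A B := by
  have ptolemy := EuclideanGeometry.mul_dist_le_mul_dist_add_mul_dist P B A C
  rw [hPA, hPB, hPC, dist_comm A C, dist_comm B A] at ptolemy
  rw [← mul_le_mul_iff_of_pos_right ht]
  linarith

theorem stmt_8_general (A B C P : EuclideanSpace ℝ (Fin 2))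
    (a b c : ℝ) (ha : a = dist B C) (hb : b = dist C A) (hc : c = dist A B)
    (lA lB lC : ℝ)
    (t : ℝ) (ht : 0 < t)
    (hPA : dist P A = lA * t) (hPB : dist P B = lB * t) (hPC : dist P C = lC * t) :
    lA * a ≤ lB * b + lC * c ∧ lB * b ≤ lC * c + lA * a ∧ lC * c ≤ lA * a + lB * b := by
  subst ha hb hc
  exact ⟨mul_dist_le_of_dist_eq_mul ht hPA hPB hPC, mul_dist_le_of_dist_eq_mul ht hPB hPC hPA,
    mul_dist_le_of_dist_eq_mul ht hPC hPA hPB⟩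

/-- If some point `P` has distances to the vertices proportional to
`(λ_A, λ_B, λ_C)`, then `(λ_A a, λ_B b, λ_C c)` satisfy the triangle
inequalities. -/
theorem stmt_8 (A B C P : EuclideanSpace ℝ (Fin 2))
    (hABC : AffineIndependent ℝ ![A, B, C])
    (a b c : ℝ) (ha : a = dist B C) (hb : b = dist C A) (hc : c = dist A B)
    (lA lB lC : ℝ) (hlA : 0 < lA) (hlB : 0 < lB) (hlC : 0 < lC)
    (t : ℝ) (ht : 0 < t)
    (hPA : dist P A = lA * t) (hPB : dist P B = lB * t) (hPC : dist P C = lC * t) :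
    lA * a ≤ lB * b + lC * c ∧ lB * b ≤ lC * c + lA * a ∧ lC * c ≤ lA * a + lB * b :=
  stmt_8_general A B C P a b c ha hb hc lA lB lC t ht hPA hPB hPC
end

section
/- Let A, B, C, P be four points in the Euclidean plane with A, B, C pairwise distinct, a = dist(B,C), b = dist(C,A), c = dist(A,B). Then there exists a (possibly degenerate) triangle with side lengths proportional to a·dist(P,A), b·dist(P,B), c·dist(P,C); that is, each of the three products is at most the sum of the other two. -/
open EuclideanGeometry

theorem dist_mul_dist_le_dist_mul_dist_add_dist_mul_dist {V P : Type*} [NormedAddCommGroup V]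
    [InnerProductSpace ℝ V] [MetricSpace P] [NormedAddTorsor V P] (A B C X : P) :
    dist B C * dist X A ≤ dist C A * dist X B + dist A B * dist X C := by
  have ptolemy := mul_dist_le_mul_dist_add_mul_dist B X C A
  rw [dist_comm B X, dist_comm B A] at ptolemy
  linarith

theorem stmt_9_general (A B C P : EuclideanSpace ℝ (Fin 2))
    (a b c : ℝ) (ha : a = dist B C) (hb : b = dist C A) (hc : c = dist A B) :
    a * dist P A ≤ b * dist P B + c * dist P C ∧
      b * dist P B ≤ c * dist P C + a * dist P A ∧
      c * dist P C ≤ a * dist P A + b * dist P B := by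
  subst ha hb hc
  exact ⟨dist_mul_dist_le_dist_mul_dist_add_dist_mul_dist A B C P,
    dist_mul_dist_le_dist_mul_dist_add_dist_mul_dist B C A P,
    dist_mul_dist_le_dist_mul_dist_add_dist_mul_dist C A B P⟩

/-- For any four points `A B C P` in the plane there is a (possibly degenerate)
triangle with side lengths `a·PA, b·PB, c·PC`, where `a = BC`, `b = CA`,
`c = AB`. -/
theorem stmt_9 (A B C P : EuclideanSpace ℝ (Fin 2))
    (hAB : A ≠ B) (hBC : B ≠ C) (hCA : C ≠ A)
    (a b c : ℝ) (ha : a = dist B C) (hb : b = dist C A) (hc : c = dist A B) :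
    a * dist P A ≤ b * dist P B + c * dist P C ∧
      b * dist P B ≤ c * dist P C + a * dist P A ∧
      c * dist P C ≤ a * dist P A + b * dist P B :=
  stmt_9_general A B C P a b c ha hb hc
end

section
/- Let A, B, C, P be points in the plane with A, B, C not collinear. Let f be the direct similarity (rotation composed with dilation) centered at A that maps C to B, and let P' = f(P). Then dist(P, P') = (dist(B,C)/dist(A,C)) · dist(A,P), dist(P', B) = (dist(A,B)/dist(A,C)) · dist(P, C), and dist(P, B) = dist(P,B), so the side lengths of triangle P B P' are proportional to (a·dist(P,A), b·dist(P,B), c·dist(P,C)) where a = dist(B,C), b = dist(C,A), c = dist(A,B). -/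
/-! Over `ℂ`, the direct similarity centred at `A` sending `C` to `B` is the complex homothety
`AffineMap.homothety A k` with `k = (B - A) / (C - A)`. It scales all distances by `‖k‖ = AB / AC`,
which gives `P'B = (AB / AC) · PC` since `B` is the image of `C`, and it moves every point `P` by
`(k - 1) (P - A)`, a vector of length `‖1 - k‖ · AP = (BC / AC) · AP`. -/

open AffineMap

theorem dist_homothety_homothety {𝕜 V P : Type*} [NormedField 𝕜] [SeminormedAddCommGroup V]
    [NormedSpace 𝕜 V] [PseudoMetricSpace P] [NormedAddTorsor V P] (c p₁ p₂ : P) (r : 𝕜) :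
    dist (homothety c r p₁) (homothety c r p₂) = ‖r‖ * dist p₁ p₂ := by
  simp only [homothety_apply, dist_eq_norm_vsub V, vadd_vsub_vadd_cancel_right, ← smul_sub,
    vsub_sub_vsub_cancel_right, norm_smul]

namespace Complex

variable {A B C : ℂ}

theorem homothety_div_apply_self (hCA : C ≠ A) : homothety A ((B - A) / (C - A)) C = B := by
  rw [homothety_apply, smul_eq_mul, vsub_eq_sub, vadd_eq_add,
    div_mul_cancel₀ _ (sub_ne_zero.2 hCA), sub_add_cancel]

theorem norm_div_sub_sub : ‖(B - A) / (C - A)‖ = dist A B / dist A C := by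
  rw [norm_div, dist_eq, dist_eq, norm_sub_rev B, norm_sub_rev C]

theorem norm_one_sub_div_sub_sub (hCA : C ≠ A) :
    ‖1 - (B - A) / (C - A)‖ = dist B C / dist A C := by
  have hCA' : C - A ≠ 0 := sub_ne_zero.2 hCA
  rw [one_sub_div hCA', sub_sub_sub_cancel_right, norm_div, dist_eq, dist_eq, norm_sub_rev C B,
    norm_sub_rev C A]

end Complex

/-- Akopyan's spiral-similarity construction: let `f` be the direct similarity
centered at `A` mapping `C` to `B`, and `P' = f P`. Then the triangle `P B P'`
has side lengths proportional to `(a·PA, b·PB, c·PC)`. -/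
theorem stmt_10 (A B C P : ℂ)
    (hABC : ¬ Collinear ℝ ({A, B, C} : Set ℂ))
    (P' : ℂ) (hP' : P' = A + ((B - A) / (C - A)) * (P - A)) :
    dist P P' = (dist B C / dist A C) * dist A P ∧
      dist P' B = (dist A B / dist A C) * dist P C := by
  have hCA : C ≠ A := (ne₁₃_of_not_collinear hABC).symm
  set k := (B - A) / (C - A)
  have hP'_homothety : P' = homothety A k P := by
    rw [hP', homothety_apply, smul_eq_mul, vsub_eq_sub, vadd_eq_add, add_comm]
  rw [hP'_homothety]
  constructor
  · rw [dist_self_homothety, Complex.norm_one_sub_div_sub_sub hCA]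
  · calc dist (homothety A k P) B = dist (homothety A k P) (homothety A k C) := by
          rw [Complex.homothety_div_apply_self hCA]
      _ = (dist A B / dist A C) * dist P C := by
          rw [dist_homothety_homothety, Complex.norm_div_sub_sub]
end

section
/- (Ceva, concurrency form used in the main construction) Let ABC be a nondegenerate triangle and let A₀ ∈ segment BC, B₀ ∈ segment CA, C₀ ∈ segment AB be interior points of the sides. If (dist(C,A₀)/dist(B,A₀)) · (dist(B,C₀)/dist(A,C₀)) · (dist(A,B₀)/dist(C,B₀)) = 1, then the cevians AA₀, BB₀, CC₀ are concurrent: there exists a point F lying on all three lines. -/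
/-!
Write `A₀ = lineMap B C t`, `B₀ = lineMap C A r`, `C₀ = lineMap A B s` with `t, r, s ∈ (0, 1)`.
The side ratios are `(1 - t) / t`, `(1 - r) / r`, `(1 - s) / s`, so the hypothesis says
`(1 - t) (1 - r) (1 - s) = t r s`. The point with barycentric weights
`a = (1 - s) (1 - t)`, `b = s (1 - t)`, `c = s t` lies on the cevian through `A₀` because
`c / (b + c) = t`, on the one through `C₀` because `b / (a + b) = s`, and on the one
through `B₀` because `a / (c + a) = r` is exactly the Ceva relation.
-/

open AffineMap Set

section Barycentric

variable {k V : Type*} [Field k] [AddCommGroup V] [Module k V]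

theorem barycentric_mem_affineSpan_pair_lineMap {a b c t : k} (A B C : V)
    (hw : a + b + c ≠ 0) (hc : c = t * (b + c)) :
    (a + b + c)⁻¹ • (a • A + b • B + c • C) ∈ line[k, A, lineMap B C t] := by
  have hD : b • B + c • C = (b + c) • lineMap B C t := by
    rw [lineMap_apply_module, smul_add, smul_smul, smul_smul, mul_comm _ (1 - t), mul_comm _ t,
      ← hc, show (1 - t) * (b + c) = b by linear_combination hc]
  have hpoint : (a + b + c)⁻¹ • (a • A + b • B + c • C) =
      lineMap A (lineMap B C t) ((b + c) / (a + b + c)) := by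
    rw [add_assoc (a • A), hD, lineMap_apply_module A]
    match_scalars
    · field_simp
      ring
    · field_simp
  exact hpoint ▸ lineMap_mem_affineSpan_pair _ _ _

end Barycentric

theorem Sbtw.exists_lineMap_dist_div_dist {V P : Type*} [NormedAddCommGroup V]
    [NormedSpace ℝ V] [MetricSpace P] [NormedAddTorsor V P] {p x q : P}
    (h : Sbtw ℝ p x q) :
    ∃ t ∈ Ioo (0 : ℝ) 1, lineMap p q t = x ∧ dist q x / dist p x = (1 - t) / t := by
  obtain ⟨⟨t, ⟨ht0, ht1⟩, rfl⟩, hpq⟩ := sbtw_iff_mem_image_Ioo_and_ne.1 h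
  refine ⟨t, ⟨ht0, ht1⟩, rfl, ?_⟩
  rw [dist_left_lineMap, dist_right_lineMap, Real.norm_of_nonneg ht0.le,
    Real.norm_of_nonneg (by linarith), mul_div_mul_right _ _ (dist_ne_zero.2 hpq)]

theorem stmt_13_general (A B C A₀ B₀ C₀ : EuclideanSpace ℝ (Fin 2))
    (hA₀ : Sbtw ℝ B A₀ C) (hB₀ : Sbtw ℝ C B₀ A) (hC₀ : Sbtw ℝ A C₀ B)
    (hceva : (dist C A₀ / dist B A₀) * (dist B C₀ / dist A C₀) *
      (dist A B₀ / dist C B₀) = 1) :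
    ∃ F : EuclideanSpace ℝ (Fin 2),
      F ∈ affineSpan ℝ ({A, A₀} : Set (EuclideanSpace ℝ (Fin 2))) ∧
      F ∈ affineSpan ℝ ({B, B₀} : Set (EuclideanSpace ℝ (Fin 2))) ∧
      F ∈ affineSpan ℝ ({C, C₀} : Set (EuclideanSpace ℝ (Fin 2))) := by
  obtain ⟨t, ⟨ht0, ht1⟩, rfl, hBC⟩ := hA₀.exists_lineMap_dist_div_dist
  obtain ⟨r, ⟨hr0, hr1⟩, rfl, hCA⟩ := hB₀.exists_lineMap_dist_div_dist
  obtain ⟨s, ⟨hs0, hs1⟩, rfl, hAB⟩ := hC₀.exists_lineMap_dist_div_dist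
  rw [hBC, hCA, hAB] at hceva
  have hceva' : (1 - r) * ((1 - s) * (1 - t)) = r * (s * t) := by
    field_simp at hceva
    linear_combination hceva
  set a := (1 - s) * (1 - t)
  set b := s * (1 - t)
  set c := s * t
  have hw : a + b + c ≠ 0 := by positivity
  refine ⟨(a + b + c)⁻¹ • (a • A + b • B + c • C),
    barycentric_mem_affineSpan_pair_lineMap A B C hw (by ring), ?_, ?_⟩
  · convert barycentric_mem_affineSpan_pair_lineMap (t := r) B C A (a := b) (b := c) (c := a)
      (by convert hw using 1; ring) (by linear_combination hceva') using 1
    module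
  · convert barycentric_mem_affineSpan_pair_lineMap (t := s) C A B (a := c) (b := a) (c := b)
      (by convert hw using 1; ring) (by ring) using 1
    module

/-- Converse of Ceva's theorem (unsigned ratios, interior points): if the
product of the side ratios equals `1`, the three cevians are concurrent. -/
theorem stmt_13 (A B C A₀ B₀ C₀ : EuclideanSpace ℝ (Fin 2))
    (hABC : AffineIndependent ℝ ![A, B, C])
    (hA₀ : Sbtw ℝ B A₀ C) (hB₀ : Sbtw ℝ C B₀ A) (hC₀ : Sbtw ℝ A C₀ B)
    (hceva : (dist C A₀ / dist B A₀) * (dist B C₀ / dist A C₀) *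
      (dist A B₀ / dist C B₀) = 1) :
    ∃ F : EuclideanSpace ℝ (Fin 2),
      F ∈ affineSpan ℝ ({A, A₀} : Set (EuclideanSpace ℝ (Fin 2))) ∧
      F ∈ affineSpan ℝ ({B, B₀} : Set (EuclideanSpace ℝ (Fin 2))) ∧
      F ∈ affineSpan ℝ ({C, C₀} : Set (EuclideanSpace ℝ (Fin 2))) :=
  stmt_13_general A B C A₀ B₀ C₀ hA₀ hB₀ hC₀ hceva
end

section
/- In the main construction, triangles A B A₁ and C₁ B C are directly similar with ratio (λ_C c)/(λ_A a); consequently ∠A A₁ B = ∠C₁ C B, and, with the similar-triangle normalization dist(B,A₁)/dist(B,C) = (λ_C c)/(λ_A a), the law of sines in triangle B A A₁ gives sin∠BAA₁/sin∠BA₁A = dist(B,A₁)/dist(B,A) = (λ_C c)/(λ_A a) · (a/c) = λ_C/λ_A. -/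
open EuclideanGeometry Real

/-- Law of sines, product form, for an inner product space. -/
lemma sin_angle_mul_aux {V : Type*} [NormedAddCommGroup V] [InnerProductSpace ℝ V]
    (x y : V) :
    Real.sin (InnerProductGeometry.angle x y) * (‖x‖ * ‖y‖) =
      Real.sin (InnerProductGeometry.angle (x - y) (-y)) * (‖x - y‖ * ‖y‖) := by
  rw [InnerProductGeometry.sin_angle_mul_norm_mul_norm,
    show ‖x - y‖ * ‖y‖ = ‖x - y‖ * ‖-y‖ by rw [norm_neg],
    InnerProductGeometry.sin_angle_mul_norm_mul_norm]
  congr 1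
  simp only [inner_sub_left, inner_sub_right, inner_neg_left, inner_neg_right,
    real_inner_comm x y]
  ring

/-- Law of sines, product form, for points. -/
lemma sin_angle_mul_dist_eq {V P : Type*} [NormedAddCommGroup V] [InnerProductSpace ℝ V]
    [MetricSpace P] [NormedAddTorsor V P] (p q r : P) :
    Real.sin (∠ p q r) * (dist q p * dist q r) =
      Real.sin (∠ p r q) * (dist r p * dist r q) := by
  have h := sin_angle_mul_aux (p -ᵥ q : V) (r -ᵥ q)
  have h1 : (p -ᵥ q : V) - (r -ᵥ q) = p -ᵥ r := by
    rw [vsub_sub_vsub_cancel_right]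
  have h2 : -(r -ᵥ q : V) = q -ᵥ r := by rw [neg_vsub_eq_vsub_rev]
  rw [h1, h2] at h
  have e1 : ∠ p q r = InnerProductGeometry.angle (p -ᵥ q : V) (r -ᵥ q) := rfl
  have e2 : ∠ p r q = InnerProductGeometry.angle (p -ᵥ r : V) (q -ᵥ r) := rfl
  rw [e1, e2, dist_eq_norm_vsub' V q p, dist_eq_norm_vsub' V q r,
    dist_eq_norm_vsub' V r p, dist_eq_norm_vsub' V r q]
  rw [← neg_vsub_eq_vsub_rev r q] at h ⊢
  simp only [norm_neg] at h ⊢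
  exact h

/-- In the main construction the triangles `A B A₁` and `C₁ B C` are similar;
hence `∠AA₁B = ∠C₁CB`, and by the law of sines in triangle `B A A₁`,
`sin ∠BAA₁ / sin ∠BA₁A = dist B A₁ / dist B A = λ_C / λ_A`. -/
theorem stmt_17 (A B C A₁ C₁ : EuclideanSpace ℝ (Fin 2))
    (hABC : AffineIndependent ℝ ![A, B, C])
    (hABA₁ : AffineIndependent ℝ ![A, B, A₁])
    (hC₁BC : AffineIndependent ℝ ![C₁, B, C])
    (a c : ℝ) (ha : a = dist B C) (hc : c = dist A B)
    (lA lC : ℝ) (hlA : 0 < lA) (hlC : 0 < lC)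
    -- the similar-triangle normalizations of the main construction
    (hBA₁ : dist B A₁ = c * lC / lA) (hBC₁ : dist B C₁ = a * lA / lC)
    -- equal angles at B
    (hangB : ∠ A B A₁ = ∠ C₁ B C) :
    ∠ A A₁ B = ∠ C₁ C B ∧
      Real.sin (∠ B A A₁) / Real.sin (∠ B A₁ A) = dist B A₁ / dist B A ∧
      dist B A₁ / dist B A = lC / lA := by
  -- basic distinctness
  have hAB : A ≠ B := fun h =>
    (by decide : (0 : Fin 3) ≠ 1) (hABC.injective (by simp [h]))
  have hBC : B ≠ C := fun h =>
    (by decide : (1 : Fin 3) ≠ 2) (hABC.injective (by simp [h]))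
  have hAA₁ : A ≠ A₁ := fun h =>
    (by decide : (0 : Fin 3) ≠ 2) (hABA₁.injective (by simp [h]))
  have hC₁C : C₁ ≠ C := fun h =>
    (by decide : (0 : Fin 3) ≠ 2) (hC₁BC.injective (by simp [h]))
  have hcpos : 0 < c := hc ▸ dist_pos.2 hAB
  have hapos : 0 < a := ha ▸ dist_pos.2 hBC
  have hAA₁pos : 0 < dist A A₁ := dist_pos.2 hAA₁
  have hC₁Cpos : 0 < dist C₁ C := dist_pos.2 hC₁C
  have hBA₁pos : 0 < dist B A₁ := by
    rw [hBA₁]; positivity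
  -- the similarity ratio
  set r : ℝ := c * lC / (a * lA) with hr
  have hrpos : 0 < r := by positivity
  have hd1 : dist A B = r * dist C₁ B := by
    rw [dist_comm C₁ B, hBC₁, ← hc, hr]
    field_simp
  have hd2 : dist A₁ B = r * dist C B := by
    rw [dist_comm A₁ B, dist_comm C B, hBA₁, ← ha, hr]
    field_simp
  -- similarity: the third sides are in ratio r
  have hd3 : dist A A₁ = r * dist C₁ C :=
    EuclideanGeometry.dist_mul_of_eq_angle_of_dist_mul C₁ B C A B A₁ r hangB hd1 hd2
  -- equality of angles at A₁ and C
  have hcos : Real.cos (∠ A A₁ B) = Real.cos (∠ C₁ C B) := by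
    have l1 := EuclideanGeometry.law_cos A A₁ B
    have l2 := EuclideanGeometry.law_cos C₁ C B
    have hd4 : dist B A₁ = r * dist B C := by
      rw [dist_comm B A₁, dist_comm B C]; exact hd2
    rw [hd1, dist_comm C₁ B, hd3, hd4] at l1
    rw [dist_comm C₁ B] at l2
    have hkey : r ^ 2 * (2 * dist C₁ C * dist B C) * Real.cos (∠ A A₁ B) =
        r ^ 2 * (2 * dist C₁ C * dist B C) * Real.cos (∠ C₁ C B) := by
      linear_combination l1 - r ^ 2 * l2
    have hne : r ^ 2 * (2 * dist C₁ C * dist B C) ≠ 0 := by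
      have : 0 < dist B C := dist_pos.2 hBC
      positivity
    exact mul_left_cancel₀ hne hkey
  have hang : ∠ A A₁ B = ∠ C₁ C B :=
    Real.injOn_cos ⟨EuclideanGeometry.angle_nonneg _ _ _, EuclideanGeometry.angle_le_pi _ _ _⟩
      ⟨EuclideanGeometry.angle_nonneg _ _ _, EuclideanGeometry.angle_le_pi _ _ _⟩ hcos
  -- law of sines in triangle B A A₁
  have hncol : ¬Collinear ℝ ({B, A₁, A} : Set (EuclideanSpace ℝ (Fin 2))) := by
    have h := affineIndependent_iff_not_collinear_set.1 hABA₁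
    have hset : ({B, A₁, A} : Set (EuclideanSpace ℝ (Fin 2))) = {A, B, A₁} := by
      ext z; simp only [Set.mem_insert_iff, Set.mem_singleton_iff]; tauto
    rwa [hset]
  have hsin_ne : Real.sin (∠ B A₁ A) ≠ 0 :=
    EuclideanGeometry.sin_ne_zero_of_not_collinear hncol
  have hls := sin_angle_mul_dist_eq (V := EuclideanSpace ℝ (Fin 2)) B A A₁
  -- hls : sin (∠ B A A₁) * (dist A B * dist A A₁) = sin (∠ B A₁ A) * (dist A₁ B * dist A₁ A)
  have hABpos : 0 < dist A B := dist_pos.2 hAB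
  have hsines : Real.sin (∠ B A A₁) / Real.sin (∠ B A₁ A) = dist B A₁ / dist B A := by
    rw [dist_comm B A₁, dist_comm B A]
    rw [div_eq_div_iff hsin_ne (ne_of_gt hABpos)]
    have h5 : dist A₁ A = dist A A₁ := dist_comm _ _
    rw [h5] at hls
    have h6 : Real.sin (∠ B A A₁) * dist A B * dist A A₁ =
        dist A₁ B * Real.sin (∠ B A₁ A) * dist A A₁ := by linear_combination hls
    exact mul_right_cancel₀ (ne_of_gt hAA₁pos) h6
  refine ⟨hang, hsines, ?_⟩
  rw [hBA₁, dist_comm B A, ← hc, div_div, mul_comm lA c,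
    mul_div_mul_left _ _ (ne_of_gt hcpos)]
end

section
/- Let ABC be an acute triangle with orthocenter H, and let A', B', C' be the feet of the altitudes from A, B, C (the orthic triangle). Then for any other triangle A''B''C'' inscribed in ABC with A'' on segment BC, B'' on segment CA, C'' on segment AB, the perimeter of the orthic triangle is at most the perimeter of A''B''C'': dist(A',B') + dist(B',C') + dist(C',A') ≤ dist(A'',B'') + dist(B'',C'') + dist(C'',A''). -/
/-!
Fejér's unfolding argument. Reflect `A''` in the lines `AB` and `AC` to points `F` and `G`.
The perimeter of `A''B''C''` is the length of the broken path `F C'' B'' G`, hence at least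
`FG`; since `AF = AG = AA''` and `∠FAG = 2∠A`, this is `2 sin A · AA'' ≥ 2 sin A · h_a`.
Multiplied by `abc` the bound reads `2Γ`, where `Γ = b²c² sin² A` is the Gram determinant of
`B - A` and `C - A`. The orthic triangle attains it: its sides are `a cos A`, `b cos B`,
`c cos C`, and `abc` times their sum is `a² ⟪AB, AC⟫ + b² ⟪BA, BC⟫ + c² ⟪CA, CB⟫ = 2Γ`.
-/

open EuclideanGeometry
open scoped RealInnerProductSpace

section InnerProductSpace

variable {V : Type*} [NormedAddCommGroup V] [InnerProductSpace ℝ V]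

theorem det_gram_fin_two (u v : V) :
    (Matrix.gram ℝ ![u, v]).det = ‖u‖ ^ 2 * ‖v‖ ^ 2 - ⟪u, v⟫ ^ 2 := by
  simp [Matrix.det_fin_two, Matrix.gram_apply, real_inner_comm u v]
  ring

theorem det_gram_eq_zero_of_finrank_lt {ι : Type*} [Fintype ι] [DecidableEq ι]
    [FiniteDimensional ℝ V] (v : ι → V) (h : Module.finrank ℝ V < Fintype.card ι) :
    (Matrix.gram ℝ v).det = 0 := by
  by_contra hv
  exact h.not_ge (Matrix.det_gram_ne_zero_iff_linearIndependent.mp hv).fintype_card_le_finrank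

theorem inner_pos_of_angle_lt_pi_div_two {x y : V}
    (h : InnerProductGeometry.angle x y < Real.pi / 2) : 0 < ⟪x, y⟫ := by
  rw [InnerProductGeometry.angle, Real.arccos_lt_pi_div_two] at h
  by_contra! hxy
  exact h.not_ge (div_nonpos_of_nonpos_of_nonneg hxy (by positivity))

theorem mem_line_of_mem_segment {A B P : V} (h : P ∈ segment ℝ A B) : P ∈ line[ℝ, A, B] :=
  (line[ℝ, A, B]).convex.segment_subset (left_mem_affineSpan_pair ℝ A B)
    (right_mem_affineSpan_pair ℝ A B) h

theorem sub_left_eq_starProjection_of_mem_line {A B P X : V}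
    (hP : P ∈ line[ℝ, A, B]) (hXP : ⟪X - P, B - A⟫ = 0) :
    P - A = (ℝ ∙ (B - A)).starProjection (X - A) := by
  refine (Submodule.eq_starProjection_of_mem_of_inner_eq_zero ?_ fun w hw => ?_).symm
  · rw [← vsub_vadd P A, vadd_left_mem_affineSpan_pair] at hP
    obtain ⟨r, hr⟩ := hP
    exact Submodule.mem_span_singleton.mpr ⟨r, by simpa using hr⟩
  · obtain ⟨r, rfl⟩ := Submodule.mem_span_singleton.mp hw
    rw [sub_sub_sub_cancel_right, inner_smul_right, hXP, mul_zero]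

theorem sub_right_eq_starProjection_of_mem_line {A B P X : V}
    (hP : P ∈ line[ℝ, A, B]) (hXP : ⟪X - P, B - A⟫ = 0) :
    P - B = (ℝ ∙ (A - B)).starProjection (X - B) := by
  refine sub_left_eq_starProjection_of_mem_line (by rwa [Set.pair_comm]) ?_
  rw [show A - B = -(B - A) by abel, inner_neg_right, hXP, neg_zero]

/-- The triangle cut off by the feet of two altitudes is similar to the whole triangle, with
ratio `|cos A|`. -/
theorem norm_mul_norm_mul_norm_starProjection_sub (u v : V) :
    ‖u‖ * ‖v‖ * ‖(ℝ ∙ v).starProjection u - (ℝ ∙ u).starProjection v‖ = |⟪u, v⟫| * ‖u - v‖ := by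
  rcases eq_or_ne u 0 with rfl | hu
  · simp
  rcases eq_or_ne v 0 with rfl | hv
  · simp
  have hu' : ‖u‖ ≠ 0 := norm_ne_zero_iff.mpr hu
  have hv' : ‖v‖ ≠ 0 := norm_ne_zero_iff.mpr hv
  refine (pow_left_inj₀ (by positivity) (by positivity) two_ne_zero).mp ?_
  simp only [Submodule.starProjection_singleton, RCLike.ofReal_real_eq_id, id, mul_pow, sq_abs,
    norm_sub_sq_real, norm_smul, real_inner_smul_left, real_inner_smul_right, Real.norm_eq_abs,
    real_inner_comm u v]
  field_simp

/-- The Gram determinant is shear invariant, so it is bounded by `‖v - u‖² ‖w‖²` for every `w`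
on the line through `u` and `v`: the height of a triangle is at most any cevian. -/
theorem det_gram_le_norm_sq_mul_norm_sq (u v : V) (r : ℝ) :
    (Matrix.gram ℝ ![u, v]).det ≤ ‖v - u‖ ^ 2 * ‖u + r • (v - u)‖ ^ 2 := by
  have hshear : (Matrix.gram ℝ ![u, v]).det + ⟪v - u, u + r • (v - u)⟫ ^ 2
      = ‖v - u‖ ^ 2 * ‖u + r • (v - u)‖ ^ 2 := by
    simp only [det_gram_fin_two, ← real_inner_self_eq_norm_sq, inner_add_left, inner_add_right,
      inner_sub_left, inner_sub_right, real_inner_smul_left, real_inner_smul_right,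
      real_inner_comm u v]
    ring
  nlinarith [sq_nonneg ⟪v - u, u + r • (v - u)⟫]

/-- Unfolding: `s • u` is fixed by the reflection in `ℝ ∙ u` and `t • v` by the one in `ℝ ∙ v`,
so the closed path `x → s • u → t • v → x` has the length of a path between the two images
of `x`. -/
theorem norm_reflection_sub_reflection_le (u v x : V) (s t : ℝ) :
    ‖(ℝ ∙ u).reflection x - (ℝ ∙ v).reflection x‖
      ≤ ‖x - s • u‖ + ‖s • u - t • v‖ + ‖t • v - x‖ := by
  have hu : ‖(ℝ ∙ u).reflection x - s • u‖ = ‖x - s • u‖ := by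
    rw [← LinearIsometryEquiv.norm_map (ℝ ∙ u).reflection (x - s • u), map_sub,
      Submodule.reflection_mem_subspace_eq_self
        (Submodule.smul_mem _ s (Submodule.mem_span_singleton_self u))]
  have hv : ‖t • v - (ℝ ∙ v).reflection x‖ = ‖t • v - x‖ := by
    rw [← LinearIsometryEquiv.norm_map (ℝ ∙ v).reflection (t • v - x), map_sub,
      Submodule.reflection_mem_subspace_eq_self
        (Submodule.smul_mem _ t (Submodule.mem_span_singleton_self v))]
  rw [← hu, ← hv]
  calc _ ≤ ‖(ℝ ∙ u).reflection x - s • u‖ + ‖s • u - (ℝ ∙ v).reflection x‖ :=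
        norm_sub_le_norm_sub_add_norm_sub _ _ _
    _ ≤ _ := by
      rw [add_assoc]
      gcongr
      exact norm_sub_le_norm_sub_add_norm_sub _ _ _

/-- In a plane the two reflections differ by a rotation through twice the angle between `u`
and `v`; algebraically, this is the vanishing of the Gram determinant of `u, v, x`. -/
theorem norm_sq_mul_norm_sq_mul_norm_reflection_sub_reflection_sq [FiniteDimensional ℝ V]
    (hV : Module.finrank ℝ V = 2) (u v x : V) :
    ‖u‖ ^ 2 * ‖v‖ ^ 2 * ‖(ℝ ∙ u).reflection x - (ℝ ∙ v).reflection x‖ ^ 2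
      = 4 * (Matrix.gram ℝ ![u, v]).det * ‖x‖ ^ 2 := by
  have hplane := det_gram_eq_zero_of_finrank_lt ![u, v, x] (by simp [hV])
  rcases eq_or_ne u 0 with rfl | hu
  · simp [det_gram_fin_two]
  rcases eq_or_ne v 0 with rfl | hv
  · simp [det_gram_fin_two]
  have hu' : ‖u‖ ≠ 0 := norm_ne_zero_iff.mpr hu
  have hv' : ‖v‖ ≠ 0 := norm_ne_zero_iff.mpr hv
  have hdiff : (ℝ ∙ u).reflection x - (ℝ ∙ v).reflection x
      = (2 * ⟪u, x⟫ / ‖u‖ ^ 2) • u - (2 * ⟪v, x⟫ / ‖v‖ ^ 2) • v := by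
    simp only [Submodule.reflection_singleton_apply, RCLike.ofReal_real_eq_id, id]
    module
  simp only [Matrix.det_fin_three, Matrix.gram_apply, Matrix.cons_val, real_inner_self_eq_norm_sq,
    real_inner_comm u v, real_inner_comm u x, real_inner_comm v x] at hplane
  rw [hdiff, det_gram_fin_two]
  simp only [norm_sub_sq_real, norm_smul, real_inner_smul_left, real_inner_smul_right,
    Real.norm_eq_abs, mul_pow, sq_abs]
  field_simp
  linear_combination (-4) * hplane

theorem prod_sides_mul_orthic_perimeter_eq {A B C A' B' C' : V}
    (hA : 0 ≤ ⟪B - A, C - A⟫) (hB : 0 ≤ ⟪A - B, C - B⟫) (hC : 0 ≤ ⟪B - C, A - C⟫)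
    (hA'mem : A' ∈ line[ℝ, B, C]) (hA'perp : ⟪A - A', C - B⟫ = 0)
    (hB'mem : B' ∈ line[ℝ, C, A]) (hB'perp : ⟪B - B', A - C⟫ = 0)
    (hC'mem : C' ∈ line[ℝ, A, B]) (hC'perp : ⟪C - C', B - A⟫ = 0) :
    dist A B * dist B C * dist C A * (dist A' B' + dist B' C' + dist C' A')
      = 2 * (Matrix.gram ℝ ![B - A, C - A]).det := by
  have sideA := norm_mul_norm_mul_norm_starProjection_sub (B - A) (C - A)
  rw [← sub_right_eq_starProjection_of_mem_line hB'mem hB'perp,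
    ← sub_left_eq_starProjection_of_mem_line hC'mem hC'perp,
    sub_sub_sub_cancel_right, sub_sub_sub_cancel_right, abs_of_nonneg hA, norm_sub_rev B A] at sideA
  have sideB := norm_mul_norm_mul_norm_starProjection_sub (C - B) (A - B)
  rw [← sub_right_eq_starProjection_of_mem_line hC'mem hC'perp,
    ← sub_left_eq_starProjection_of_mem_line hA'mem hA'perp, sub_sub_sub_cancel_right,
    sub_sub_sub_cancel_right, real_inner_comm, abs_of_nonneg hB, norm_sub_rev C B] at sideB
  have sideC := norm_mul_norm_mul_norm_starProjection_sub (A - C) (B - C)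
  rw [← sub_right_eq_starProjection_of_mem_line hA'mem hA'perp,
    ← sub_left_eq_starProjection_of_mem_line hB'mem hB'perp, sub_sub_sub_cancel_right,
    sub_sub_sub_cancel_right, real_inner_comm, abs_of_nonneg hC, norm_sub_rev A C] at sideC
  have hsum : ‖B - C‖ ^ 2 * ⟪B - A, C - A⟫ + ‖C - A‖ ^ 2 * ⟪A - B, C - B⟫
      + ‖A - B‖ ^ 2 * ⟪B - C, A - C⟫ = 2 * (Matrix.gram ℝ ![B - A, C - A]).det := by
    simp only [det_gram_fin_two, ← real_inner_self_eq_norm_sq, inner_sub_left, inner_sub_right,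
      real_inner_comm A B, real_inner_comm A C, real_inner_comm B C]
    ring
  simp only [dist_eq_norm]
  linear_combination ‖B - C‖ * sideA + ‖C - A‖ * sideB + ‖A - B‖ * sideC + hsum

theorem two_mul_det_gram_le_prod_sides_mul_perimeter [FiniteDimensional ℝ V]
    (hV : Module.finrank ℝ V = 2) {A B C A'' B'' C'' : V} (hA'' : A'' ∈ line[ℝ, B, C])
    (hB'' : B'' ∈ line[ℝ, C, A]) (hC'' : C'' ∈ line[ℝ, A, B]) :
    2 * (Matrix.gram ℝ ![B - A, C - A]).det
      ≤ dist A B * dist B C * dist C A * (dist A'' B'' + dist B'' C'' + dist C'' A'') := by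
  obtain ⟨r, hr⟩ := mem_affineSpan_pair_iff_exists_lineMap_eq.mp hA''
  obtain ⟨t, ht⟩ := mem_affineSpan_pair_iff_exists_lineMap_rev_eq.mp hB''
  obtain ⟨s, hs⟩ := mem_affineSpan_pair_iff_exists_lineMap_eq.mp hC''
  have hx : A'' - A = (B - A) + r • ((C - A) - (B - A)) := by
    rw [← hr, AffineMap.lineMap_apply_module']
    module
  have hy : t • (C - A) = B'' - A := by
    rw [← ht, AffineMap.lineMap_apply_module', add_sub_cancel_right]
  have hz : s • (B - A) = C'' - A := by
    rw [← hs, AffineMap.lineMap_apply_module', add_sub_cancel_right]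
  have hplane :=
    norm_sq_mul_norm_sq_mul_norm_reflection_sub_reflection_sq hV (B - A) (C - A) (A'' - A)
  have hheight := det_gram_le_norm_sq_mul_norm_sq (B - A) (C - A) r
  rw [← hx, sub_sub_sub_cancel_right] at hheight
  set d := ‖(ℝ ∙ (B - A)).reflection (A'' - A) - (ℝ ∙ (C - A)).reflection (A'' - A)‖
  set G := (Matrix.gram ℝ ![B - A, C - A]).det
  have hunfold : d ≤ dist A'' B'' + dist B'' C'' + dist C'' A'' := by
    have := norm_reflection_sub_reflection_le (B - A) (C - A) (A'' - A) s t
    rw [hy, hz, sub_sub_sub_cancel_right, sub_sub_sub_cancel_right, sub_sub_sub_cancel_right,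
      ← dist_eq_norm A'' C'', ← dist_eq_norm C'' B'', ← dist_eq_norm B'' A''] at this
    linarith [dist_comm A'' C'', dist_comm C'' B'', dist_comm B'' A'']
  have hG : 0 ≤ G := (Matrix.posSemidef_gram ℝ _).det_nonneg
  have hsq : (2 * G) ^ 2 ≤ (‖B - A‖ * ‖C - B‖ * ‖C - A‖ * d) ^ 2 :=
    calc (2 * G) ^ 2 = 4 * G * G := by ring
      _ ≤ 4 * G * (‖C - B‖ ^ 2 * ‖A'' - A‖ ^ 2) := by gcongr
      _ = (‖B - A‖ * ‖C - B‖ * ‖C - A‖ * d) ^ 2 := by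
        linear_combination (-‖C - B‖ ^ 2) * hplane
  rw [dist_comm A B, dist_comm B C, dist_eq_norm, dist_eq_norm, dist_eq_norm]
  calc 2 * G ≤ ‖B - A‖ * ‖C - B‖ * ‖C - A‖ * d :=
        (pow_le_pow_iff_left₀ (by positivity) (by positivity) two_ne_zero).mp hsq
    _ ≤ _ := by gcongr

end InnerProductSpace

theorem stmt_19_general (A B C A' B' C' : EuclideanSpace ℝ (Fin 2))
    (hacuteA : ∠ B A C < Real.pi / 2)
    (hacuteB : ∠ A B C < Real.pi / 2)
    (hacuteC : ∠ B C A < Real.pi / 2)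
    -- feet of the altitudes
    (hA'mem : A' ∈ affineSpan ℝ ({B, C} : Set (EuclideanSpace ℝ (Fin 2))))
    (hA'perp : (inner ℝ (A - A') (C - B) : ℝ) = 0)
    (hB'mem : B' ∈ affineSpan ℝ ({C, A} : Set (EuclideanSpace ℝ (Fin 2))))
    (hB'perp : (inner ℝ (B - B') (A - C) : ℝ) = 0)
    (hC'mem : C' ∈ affineSpan ℝ ({A, B} : Set (EuclideanSpace ℝ (Fin 2))))
    (hC'perp : (inner ℝ (C - C') (B - A) : ℝ) = 0) :
    ∀ A'' B'' C'' : EuclideanSpace ℝ (Fin 2),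
      A'' ∈ segment ℝ B C → B'' ∈ segment ℝ C A → C'' ∈ segment ℝ A B →
      dist A' B' + dist B' C' + dist C' A' ≤
        dist A'' B'' + dist B'' C'' + dist C'' A'' := by
  intro A'' B'' C'' hA'' hB'' hC''
  have hA : 0 < ⟪B - A, C - A⟫ := inner_pos_of_angle_lt_pi_div_two hacuteA
  have hB : 0 < ⟪A - B, C - B⟫ := inner_pos_of_angle_lt_pi_div_two hacuteB
  have hC : 0 < ⟪B - C, A - C⟫ := inner_pos_of_angle_lt_pi_div_two hacuteC
  have hsides : 0 < dist A B * dist B C * dist C A := by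
    have hAB : A ≠ B := by rintro rfl; simp at hA
    have hBC : B ≠ C := by rintro rfl; simp at hB
    have hCA : C ≠ A := by rintro rfl; simp at hA
    exact mul_pos (mul_pos (dist_pos.mpr hAB) (dist_pos.mpr hBC)) (dist_pos.mpr hCA)
  have horthic := prod_sides_mul_orthic_perimeter_eq hA.le hB.le hC.le
    hA'mem hA'perp hB'mem hB'perp hC'mem hC'perp
  have hlower := two_mul_det_gram_le_prod_sides_mul_perimeter finrank_euclideanSpace_fin
    (mem_line_of_mem_segment hA'') (mem_line_of_mem_segment hB'') (mem_line_of_mem_segment hC'')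
  exact le_of_mul_le_mul_left (horthic ▸ hlower) hsides

/-- Fagnano's theorem: in an acute triangle, the orthic triangle minimizes the
perimeter among all inscribed triangles. -/
theorem stmt_19 (A B C A' B' C' : EuclideanSpace ℝ (Fin 2))
    (hABC : AffineIndependent ℝ ![A, B, C])
    (hacuteA : ∠ B A C < Real.pi / 2)
    (hacuteB : ∠ A B C < Real.pi / 2)
    (hacuteC : ∠ B C A < Real.pi / 2)
    -- feet of the altitudes
    (hA'mem : A' ∈ affineSpan ℝ ({B, C} : Set (EuclideanSpace ℝ (Fin 2))))
    (hA'perp : (inner ℝ (A - A') (C - B) : ℝ) = 0)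
    (hB'mem : B' ∈ affineSpan ℝ ({C, A} : Set (EuclideanSpace ℝ (Fin 2))))
    (hB'perp : (inner ℝ (B - B') (A - C) : ℝ) = 0)
    (hC'mem : C' ∈ affineSpan ℝ ({A, B} : Set (EuclideanSpace ℝ (Fin 2))))
    (hC'perp : (inner ℝ (C - C') (B - A) : ℝ) = 0) :
    ∀ A'' B'' C'' : EuclideanSpace ℝ (Fin 2),
      A'' ∈ segment ℝ B C → B'' ∈ segment ℝ C A → C'' ∈ segment ℝ A B →
      dist A' B' + dist B' C' + dist C' A' ≤
        dist A'' B'' + dist B'' C'' + dist C'' A'' :=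
  stmt_19_general A B C A' B' C' hacuteA hacuteB hacuteC hA'mem hA'perp hB'mem hB'perp hC'mem
    hC'perp
end
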